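/- Let f : ℝ² → ℂ be integrable on the open unit square (0,1)² with respect to Lebesgue measure. Then ∫_0^1 ∫_0^1 f(ω₁, ω₂) dω₂ dω₁ = ∫_0^1 ∫_0^1 ( f(ω, ηω) + f(ηω, ω) ) · ω dω dη. -/

import Mathlib

/-!
The open unit square splits, up to its null diagonal, into the triangle `ω₁ < ω₂` and its mirror
image under `Prod.swap`. The Duffy map `(η, ω) ↦ (ηω, ω)` maps the open square bijectively onto
that triangle with Jacobian determinant `ω`, so the change of variables formula turns both
triangle integrals into integrals over the square; Fubini passes between set integrals over the
square and iterated integrals.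
-/

open MeasureTheory Set

theorem MeasureTheory.Measure.prod_diagonal_eq_zero {α : Type*} [MeasurableSpace α]
    [MeasurableEq α] (μ ν : Measure α) [SFinite ν] [NullSingletonClass ν] :
    μ.prod ν (diagonal α) = 0 := by
  have hslice (x : α) : Prod.mk x ⁻¹' diagonal α = {x} := by
    ext y
    simp [eq_comm]
  simp [Measure.prod_apply measurableSet_diagonal, hslice]

def upperTriangle : Set (ℝ × ℝ) := {p | 0 < p.1 ∧ p.1 < p.2 ∧ p.2 < 1}

theorem measurableSet_upperTriangle : MeasurableSet upperTriangle :=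
  (measurableSet_lt measurable_const measurable_fst).inter
    ((measurableSet_lt measurable_fst measurable_snd).inter
      (measurableSet_lt measurable_snd measurable_const))

theorem upperTriangle_subset_unitSquare : upperTriangle ⊆ Ioo 0 1 ×ˢ Ioo 0 1 := by
  rintro ⟨a, b⟩ ⟨h0a, hab, hb1⟩
  exact ⟨⟨h0a, hab.trans hb1⟩, ⟨h0a.trans hab, hb1⟩⟩

theorem swap_preimage_upperTriangle_subset_unitSquare :
    Prod.swap ⁻¹' upperTriangle ⊆ Ioo 0 1 ×ˢ Ioo 0 1 := by
  rw [← preimage_swap_prod]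
  exact preimage_mono upperTriangle_subset_unitSquare

theorem disjoint_upperTriangle_swap_preimage :
    Disjoint upperTriangle (Prod.swap ⁻¹' upperTriangle) :=
  disjoint_left.2 fun _ ⟨_, hlt, _⟩ ⟨_, hgt, _⟩ => hlt.asymm hgt

theorem unitSquare_ae_eq_upperTriangle_union_swap :
    (Ioo 0 1 ×ˢ Ioo 0 1 : Set (ℝ × ℝ)) =ᵐ[volume]
      (upperTriangle ∪ Prod.swap ⁻¹' upperTriangle : Set (ℝ × ℝ)) := by
  have hdiag : volume (diagonal ℝ) = 0 := by
    rw [Measure.volume_eq_prod]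
    exact Measure.prod_diagonal_eq_zero _ _
  refine ae_eq_set.2 ⟨measure_mono_null ?_ hdiag, ?_⟩
  · rintro ⟨a, b⟩ ⟨⟨⟨ha0, ha1⟩, hb0, hb1⟩, hnot⟩
    rcases lt_trichotomy a b with h | h | h
    · exact absurd (Or.inl ⟨ha0, h, hb1⟩) hnot
    · exact h
    · exact absurd (Or.inr ⟨hb0, h, ha1⟩) hnot
  · simp [sdiff_eq_empty.2 (union_subset upperTriangle_subset_unitSquare
      swap_preimage_upperTriangle_subset_unitSquare)]

def duffy (p : ℝ × ℝ) : ℝ × ℝ := (p.1 * p.2, p.2)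

def duffyFDeriv (p : ℝ × ℝ) : ℝ × ℝ →L[ℝ] ℝ × ℝ :=
  (p.1 • ContinuousLinearMap.snd ℝ ℝ ℝ + p.2 • ContinuousLinearMap.fst ℝ ℝ ℝ).prod
    (ContinuousLinearMap.snd ℝ ℝ ℝ)

theorem hasFDerivAt_duffy (p : ℝ × ℝ) : HasFDerivAt duffy (duffyFDeriv p) p :=
  (hasFDerivAt_fst.mul hasFDerivAt_snd).prodMk hasFDerivAt_snd

theorem det_duffyFDeriv (p : ℝ × ℝ) : (duffyFDeriv p).det = p.2 := by
  rw [ContinuousLinearMap.det, ← LinearMap.det_toMatrix (Module.Basis.finTwoProd ℝ),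
    Matrix.det_fin_two]
  simp [LinearMap.toMatrix_apply, duffyFDeriv]

theorem injOn_duffy : InjOn duffy (Ioo 0 1 ×ˢ Ioo 0 1) := by
  rintro ⟨η₁, ω₁⟩ ⟨-, hω₁, -⟩ ⟨η₂, ω₂⟩ - h
  obtain ⟨hη, rfl⟩ := Prod.mk.inj h
  simp only [Prod.mk.injEq, and_true]
  exact mul_right_cancel₀ hω₁.ne' hη

theorem duffy_image_unitSquare : duffy '' (Ioo 0 1 ×ˢ Ioo 0 1) = upperTriangle := by
  ext ⟨a, b⟩
  constructor
  · rintro ⟨⟨η, ω⟩, ⟨⟨hη0, hη1⟩, hω0, hω1⟩, h⟩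
    obtain ⟨rfl, rfl⟩ := Prod.mk.inj h
    exact ⟨mul_pos hη0 hω0, mul_lt_of_lt_one_left hω0 hη1, hω1⟩
  · rintro ⟨ha0, hab, hb1⟩
    have hb0 : 0 < b := ha0.trans hab
    refine ⟨(a / b, b), ⟨⟨div_pos ha0 hb0, (div_lt_one hb0).2 hab⟩, hb0, hb1⟩, ?_⟩
    simp [duffy, div_mul_cancel₀ _ hb0.ne']

section

variable {E : Type*} [NormedAddCommGroup E]

theorem integrableOn_upperTriangle_comp_swap {g : ℝ × ℝ → E}
    (hg : IntegrableOn g (Ioo 0 1 ×ˢ Ioo 0 1)) :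
    IntegrableOn (fun p => g p.swap) upperTriangle := by
  have h := (Measure.measurePreserving_swap (μ := volume) (ν := volume)).integrableOn_comp_preimage
    MeasurableEquiv.prodComm.measurableEmbedding |>.2
    (hg.mono_set swap_preimage_upperTriangle_subset_unitSquare)
  simpa [preimage_preimage, Function.comp_def, ← Measure.volume_eq_prod] using h

variable [NormedSpace ℝ E]

theorem setIntegral_unitSquare_eq_add_swap (g : ℝ × ℝ → E)
    (hg : IntegrableOn g (Ioo 0 1 ×ˢ Ioo 0 1)) :
    ∫ p in Ioo 0 1 ×ˢ Ioo 0 1, g p =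
      (∫ p in upperTriangle, g p) + ∫ p in upperTriangle, g p.swap := by
  have hswap : ∫ p in Prod.swap ⁻¹' upperTriangle, g p = ∫ p in upperTriangle, g p.swap := by
    simpa [← Measure.volume_eq_prod] using
      (Measure.measurePreserving_swap (μ := volume) (ν := volume)).setIntegral_preimage_emb
        MeasurableEquiv.prodComm.measurableEmbedding (fun p => g p.swap) upperTriangle
  rw [setIntegral_congr_set unitSquare_ae_eq_upperTriangle_union_swap,
    setIntegral_union disjoint_upperTriangle_swap_preimage
      (measurableSet_upperTriangle.preimage measurable_swap)
      (hg.mono_set upperTriangle_subset_unitSquare)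
      (hg.mono_set swap_preimage_upperTriangle_subset_unitSquare), hswap]

theorem abs_det_duffyFDeriv_smul_eqOn (g : ℝ × ℝ → E) :
    EqOn (fun x => |(duffyFDeriv x).det| • g (duffy x)) (fun x => x.2 • g (duffy x))
      (Ioo 0 1 ×ˢ Ioo 0 1) := by
  rintro x ⟨-, hx0, -⟩
  simp only [det_duffyFDeriv, abs_of_pos hx0]

theorem integrableOn_upperTriangle_iff_duffy (g : ℝ × ℝ → E) :
    IntegrableOn g upperTriangle ↔
      IntegrableOn (fun x => x.2 • g (duffy x)) (Ioo 0 1 ×ˢ Ioo 0 1) := by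
  rw [← duffy_image_unitSquare, integrableOn_image_iff_integrableOn_abs_det_fderiv_smul volume
    (measurableSet_Ioo.prod measurableSet_Ioo) (fun p _ => (hasFDerivAt_duffy p).hasFDerivWithinAt)
    injOn_duffy]
  exact integrableOn_congr_fun (abs_det_duffyFDeriv_smul_eqOn g)
    (measurableSet_Ioo.prod measurableSet_Ioo)

theorem setIntegral_upperTriangle_eq_duffy (g : ℝ × ℝ → E) :
    ∫ p in upperTriangle, g p = ∫ x in Ioo 0 1 ×ˢ Ioo 0 1, x.2 • g (duffy x) := by
  rw [← duffy_image_unitSquare, integral_image_eq_integral_abs_det_fderiv_smul volume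
    (measurableSet_Ioo.prod measurableSet_Ioo) (fun p _ => (hasFDerivAt_duffy p).hasFDerivWithinAt)
    injOn_duffy]
  exact setIntegral_congr_fun (measurableSet_Ioo.prod measurableSet_Ioo)
    (abs_det_duffyFDeriv_smul_eqOn g)

theorem integrableOn_unitSquare_duffy {g : ℝ × ℝ → E}
    (hg : IntegrableOn g (Ioo 0 1 ×ˢ Ioo 0 1)) :
    IntegrableOn (fun x => x.2 • (g (x.2, x.1 * x.2) + g (x.1 * x.2, x.2)))
      (Ioo 0 1 ×ˢ Ioo 0 1) := by
  simp_rw [smul_add]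
  exact ((integrableOn_upperTriangle_iff_duffy _).1 (integrableOn_upperTriangle_comp_swap hg)).add
    ((integrableOn_upperTriangle_iff_duffy g).1 (hg.mono_set upperTriangle_subset_unitSquare))

theorem setIntegral_unitSquare_eq_duffy {g : ℝ × ℝ → E}
    (hg : IntegrableOn g (Ioo 0 1 ×ˢ Ioo 0 1)) :
    ∫ p in Ioo 0 1 ×ˢ Ioo 0 1, g p =
      ∫ x in Ioo 0 1 ×ˢ Ioo 0 1, x.2 • (g (x.2, x.1 * x.2) + g (x.1 * x.2, x.2)) := by
  simp_rw [smul_add]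
  rw [setIntegral_unitSquare_eq_add_swap g hg, add_comm, setIntegral_upperTriangle_eq_duffy,
    setIntegral_upperTriangle_eq_duffy, integral_add]
  · rfl
  · exact (integrableOn_upperTriangle_iff_duffy _).1 (integrableOn_upperTriangle_comp_swap hg)
  · exact (integrableOn_upperTriangle_iff_duffy g).1 (hg.mono_set upperTriangle_subset_unitSquare)

end

/-- **Duffy transform of an integral over the unit square.** For `f` integrable on
the open unit square,
`∫_0^1 ∫_0^1 f(ω₁, ω₂) dω₂ dω₁ = ∫_0^1 ∫_0^1 (f(ω, ηω) + f(ηω, ω)) ω dω dη`. -/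
theorem stmt_6 (f : ℝ × ℝ → ℂ)
    (hf : IntegrableOn f (Set.Ioo (0 : ℝ) 1 ×ˢ Set.Ioo (0 : ℝ) 1)) :
    (∫ ω₁ in Set.Ioo (0 : ℝ) 1, ∫ ω₂ in Set.Ioo (0 : ℝ) 1, f (ω₁, ω₂))
      = ∫ η in Set.Ioo (0 : ℝ) 1, ∫ ω in Set.Ioo (0 : ℝ) 1,
          (f (ω, η * ω) + f (η * ω, ω)) * (ω : ℂ) := by
  have hsmul : (fun x : ℝ × ℝ => x.2 • (f (x.2, x.1 * x.2) + f (x.1 * x.2, x.2))) =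
      fun x => (f (x.2, x.1 * x.2) + f (x.1 * x.2, x.2)) * (x.2 : ℂ) := by
    ext x
    rw [Complex.real_smul, mul_comm]
  have hint := integrableOn_unitSquare_duffy hf
  rw [hsmul, Measure.volume_eq_prod] at hint
  rw [← setIntegral_prod _ hint, ← hsmul, ← Measure.volume_eq_prod,
    ← setIntegral_unitSquare_eq_duffy hf, Measure.volume_eq_prod]
  exact (setIntegral_prod f hf).symm
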